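/- arXiv:1301.0541 — 2 statements merged into one kernel-verified Lean document; each statement's English description precedes it below -/
import Mathlib

section
/- For every integer k ≥ 1 there exists a triangle-free overlap game graph G (with some meta-forest M and representation μ) such that G has at most 2^(2^(2k)) vertices and the chromatic number of G is at least k. -/
/-- Closed intervals `[a, b]` and `[c, d]` overlap. -/
def IntervalOverlap (a b c d : ℝ) : Prop :=
  (a < c ∧ c < b ∧ b < d) ∨ (c < a ∧ a < d ∧ d < b)

/-- A rooted forest on the vertex set `V`, given by a parent function with no cycles. -/
structure RootedForest (V : Type) where
  parent : V → Option V
  acyclic : ∀ v, ¬ Relation.TransGen (fun x y => parent y = some x) v v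

/-- `M.anc x y` means `x ≠ y` and `x` is an ancestor of `y` in `M` (written `x ≺ y`). -/
def RootedForest.anc {V : Type} (M : RootedForest V) : V → V → Prop :=
  Relation.TransGen (fun x y => M.parent y = some x)

/-- `G` is an overlap game graph with meta-forest `M` and representation `v ↦ [μl v, μr v]`. -/
structure IsOGG {V : Type} (G : SimpleGraph V) (M : RootedForest V) (μl μr : V → ℝ) : Prop where
  nondeg : ∀ v, μl v < μr v
  endpoints_lr : ∀ v w, μl v ≠ μr w
  endpoints_l : ∀ v w, v ≠ w → μl v ≠ μl w
  endpoints_r : ∀ v w, v ≠ w → μr v ≠ μr w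
  g1 : ∀ x y, M.anc x y → μl x < μl y
  g2 : ∀ x y, G.Adj x y ↔
    (M.anc x y ∨ M.anc y x) ∧ IntervalOverlap (μl x) (μr x) (μl y) (μr y)
  g3 : ¬ ∃ x y z, M.anc x y ∧ M.anc y z ∧
    IntervalOverlap (μl x) (μr x) (μl y) (μr y) ∧
    Set.Icc (μl z) (μr z) ⊆ Set.Icc (μl x) (μr x) ∩ Set.Icc (μl y) (μr y)

/-- A vertex is secondary if its interval is contained in the interval of its parent. -/
def Secondary {V : Type} (M : RootedForest V) (μl μr : V → ℝ) (v : V) : Prop :=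
  ∃ u, M.parent v = some u ∧ Set.Icc (μl v) (μr v) ⊆ Set.Icc (μl u) (μr u)

def Primary {V : Type} (M : RootedForest V) (μl μr : V → ℝ) (v : V) : Prop :=
  ¬ Secondary M μl μr v

/-- `P(u)`: the set of vertices `v` such that `u` is the first primary vertex on the
path in `M` from `v` towards the root (including `u` itself). -/
def Pset {V : Type} (M : RootedForest V) (μl μr : V → ℝ) (u : V) : Set V :=
  {v | (u = v ∨ M.anc u v) ∧
    ∀ w, (w = v ∨ M.anc w v) → M.anc u w → Secondary M μl μr w}

def IsLeaf {V : Type} (M : RootedForest V) (v : V) : Prop := ∀ w, M.parent w ≠ some v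

/-- `P` is the vertex set of a root-to-leaf path of `M`. -/
def RootToLeafPath {V : Type} (M : RootedForest V) (P : Set V) : Prop :=
  ∃ v, IsLeaf M v ∧ P = {w | w = v ∨ M.anc w v}

/-- The number of vertices of the subtree of `M` rooted at `v`. -/
noncomputable def subtreeSize {V : Type} (M : RootedForest V) (v : V) : ℕ :=
  Nat.card {w : V // w = v ∨ M.anc v w}

/-- `s` assigns to each non-leaf vertex a child whose subtree is largest. -/
def IsHeavyChildFun {V : Type} (M : RootedForest V) (s : V → V) : Prop :=
  ∀ u : V, (∃ w, M.parent w = some u) →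
    M.parent (s u) = some u ∧ ∀ w, M.parent w = some u → subtreeSize M w ≤ subtreeSize M (s u)

/-- A heavy edge from `x` to its child `y = s x`. -/
def HeavyStep {V : Type} (M : RootedForest V) (s : V → V) (x y : V) : Prop :=
  M.parent y = some x ∧ y = s x

/-- `x` and `y` lie on the same heavy path of the heavy-light decomposition given by `s`. -/
def SameHeavyPath {V : Type} (M : RootedForest V) (s : V → V) (x y : V) : Prop :=
  Relation.EqvGen (HeavyStep M s) x y


/-!
Every graph below comes from an interval forest in which each interval carries a *window*: a
subinterval containing no endpoint and meeting no other window. Call such a forest a gadget of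
level `j` if every proper colouring uses at least `j` colours on the intervals covering some
window. One vertex is a gadget of level 1. From a gadget `F` of level `j`, nest into the right
half of the window of each vertex `u` a copy of `F` in which every vertex `v` has received a
pendant child, whose interval starts in the right half of the window of `v` and ends to the
right of all intervals of `F`. Given a proper colouring, `F` forces `j` colours around the window
of some `u` in the outer copy, and `j` colours around the window of some `v` in the copy nested
at `u`. If these two colour sets differ, the window of `v` sees `j + 1` colours; otherwise the
pendant child of `v`, which overlaps every interval covering the window of `v`, needs a new
colour, and its own window sees `j + 1` colours.

Two invariants keep the graphs triangle-free and satisfying (G3): two overlapping ancestors of a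
vertex never both overlap it, and of two overlapping intervals among the ancestors of `v`, one
ends before the window of `v`. The number of vertices grows as `n ↦ n + 2 n²`.
-/

section IntervalOverlap

variable {a b c d : ℝ}

lemma intervalOverlap_comm : IntervalOverlap a b c d ↔ IntervalOverlap c d a b := by
  unfold IntervalOverlap; tauto

lemma not_intervalOverlap_self (a b : ℝ) : ¬ IntervalOverlap a b a b := by
  rintro (⟨h, -⟩ | ⟨h, -⟩) <;> exact lt_irrefl a h

lemma StrictMono.intervalOverlap_iff {f : ℝ → ℝ} (hf : StrictMono f) :
    IntervalOverlap (f a) (f b) (f c) (f d) ↔ IntervalOverlap a b c d := by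
  simp only [IntervalOverlap, hf.lt_iff_lt]

lemma IntervalOverlap.lt_right_of_left_lt (h : IntervalOverlap a b c d) (hac : a < c) :
    c < b := by
  rcases h with ⟨-, h, -⟩ | ⟨h, -⟩
  · exact h
  · exact absurd h hac.not_gt

lemma not_intervalOverlap_of_avoid {lo hi : ℝ} (ha : a < lo ∨ hi < a) (hb : b < lo ∨ hi < b)
    (hc : lo < c) (hd : d < hi) : ¬ IntervalOverlap a b c d := by
  rintro (⟨h₁, h₂, h₃⟩ | ⟨h₁, h₂, h₃⟩) <;> rcases ha with ha | ha <;> rcases hb with hb | hb <;>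
    linarith

end IntervalOverlap

lemma disjoint_of_subset_Iio_of_subset_Ioi {s t : Set ℝ} {c : ℝ} (hs : s ⊆ Set.Iio c)
    (ht : t ⊆ Set.Ioi c) : Disjoint s t :=
  (Set.Iic_disjoint_Ioi le_rfl).mono (hs.trans Set.Iio_subset_Iic_self) ht

lemma Set.succ_le_ncard_union_or_eq {α : Type} {s t : Set α} {j : ℕ} (hs : s.Finite)
    (ht : t.Finite) (hjs : j ≤ s.ncard) (hjt : j ≤ t.ncard) :
    j + 1 ≤ (s ∪ t).ncard ∨ s = t := by
  by_contra! h
  have hu : (s ∪ t).ncard ≤ j := Nat.lt_succ_iff.1 h.1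
  have hsu := Set.eq_of_subset_of_ncard_le Set.subset_union_left (hu.trans hjs) (hs.union ht)
  have htu := Set.eq_of_subset_of_ncard_le Set.subset_union_right (hu.trans hjt) (hs.union ht)
  exact h.2 (hsu.trans htu.symm)

section Ancestry

variable {V W : Type} {p : V → Option V} {q : W → Option W}

def Anc (p : V → Option V) : V → V → Prop := Relation.TransGen fun x y => p y = some x

def AncOrEq (p : V → Option V) : V → V → Prop := Relation.ReflTransGen fun x y => p y = some x

lemma AncOrEq.refl (v : V) : AncOrEq p v v := Relation.ReflTransGen.refl

lemma Anc.ancOrEq {z v : V} (h : Anc p z v) : AncOrEq p z v := h.to_reflTransGen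

lemma Anc.trans_ancOrEq {x y z : V} (hxy : Anc p x y) (hyz : AncOrEq p y z) : Anc p x z :=
  hxy.trans_left hyz

lemma AncOrEq.trans_anc {x y z : V} (hxy : AncOrEq p x y) (hyz : Anc p y z) : Anc p x z :=
  hyz.trans_right hxy

lemma ancOrEq_iff {z v : V} : AncOrEq p z v ↔ z = v ∨ Anc p z v := by
  rw [AncOrEq, Relation.reflTransGen_iff_eq_or_transGen, eq_comm]; rfl

lemma anc_of_parent {z v : V} (h : p v = some z) : Anc p z v := Relation.TransGen.single h

lemma not_anc_of_parent_none {x y : W} : ¬ Anc (fun _ : W => none) y x := fun h => by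
  obtain ⟨_, -, h⟩ := Relation.TransGen.tail'_iff.1 h
  cases h

lemma exists_root_ancOrEq [Finite V] (hirr : ∀ v, ¬ Anc p v v) (x : V) :
    ∃ r, p r = none ∧ AncOrEq p r x := by
  have : IsTrans V (Anc p) := ⟨fun _ _ _ => Relation.TransGen.trans⟩
  have : Std.Irrefl (Anc p) := ⟨hirr⟩
  induction x using (Finite.wellFounded_of_trans_of_irrefl (Anc p)).induction with
  | _ x ih =>
    cases hx : p x with
    | none => exact ⟨x, hx, AncOrEq.refl x⟩
    | some y =>
      obtain ⟨r, hr, hry⟩ := ih y (anc_of_parent hx)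
      exact ⟨r, hr, hry.tail hx⟩

/-- The forest obtained by hanging a copy `{u} × W` of the forest `q` below every vertex `u`
of the forest `p`: the roots of the copy become children of `u`. -/
def substParent (p : V → Option V) (q : W → Option W) : V ⊕ V × W → Option (V ⊕ V × W)
  | .inl v => (p v).map .inl
  | .inr (u, x) => some ((q x).elim (.inl u) fun y => .inr (u, y))

lemma anc_substParent_inl {z : V ⊕ V × W} {v : V} (h : Anc (substParent p q) z (.inl v)) :
    ∃ a, z = .inl a ∧ Anc p a v := by
  generalize hw : Sum.inl v = w at h
  induction h generalizing v with
  | single h =>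
    subst hw
    obtain ⟨a, ha, rfl⟩ := Option.map_eq_some_iff.1 h
    exact ⟨a, rfl, anc_of_parent ha⟩
  | tail _ h ih =>
    subst hw
    obtain ⟨a, ha, rfl⟩ := Option.map_eq_some_iff.1 h
    obtain ⟨b, rfl, hb⟩ := ih rfl
    exact ⟨b, rfl, hb.tail ha⟩

lemma anc_substParent_inr {z : V ⊕ V × W} {u : V} {x : W}
    (h : Anc (substParent p q) z (.inr (u, x))) :
    (∃ y, z = .inr (u, y) ∧ Anc q y x) ∨ ∃ a, z = .inl a ∧ AncOrEq p a u := by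
  generalize hw : Sum.inr (u, x) = w at h
  induction h generalizing x with
  | single h =>
    subst hw
    cases hx : q x with
    | none =>
      simp only [substParent, hx, Option.elim_none, Option.some_inj] at h
      exact .inr ⟨u, h.symm, AncOrEq.refl u⟩
    | some y =>
      simp only [substParent, hx, Option.elim_some, Option.some_inj] at h
      exact .inl ⟨y, h.symm, anc_of_parent hx⟩
  | tail hzb h ih =>
    subst hw
    cases hx : q x with
    | none =>
      simp only [substParent, hx, Option.elim_none, Option.some_inj] at h
      subst h
      obtain ⟨a, rfl, ha⟩ := anc_substParent_inl hzb
      exact .inr ⟨a, rfl, ha.ancOrEq⟩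
    | some y =>
      simp only [substParent, hx, Option.elim_some, Option.some_inj] at h
      subst h
      exact (ih rfl).imp (fun ⟨c, hc, hcy⟩ => ⟨c, hc, hcy.tail hx⟩) id

lemma anc_substParent_inl_inl {a b : V} :
    Anc (substParent p q) (.inl a) (.inl b) ↔ Anc p a b := by
  refine ⟨fun h => ?_, fun h => Relation.TransGen.lift Sum.inl (fun x y hxy => ?_) _ _ h⟩
  · obtain ⟨c, hc, hcb⟩ := anc_substParent_inl h
    exact Sum.inl_injective hc ▸ hcb
  · simp [Function.onFun, substParent, hxy]

lemma anc_substParent_inr_inr {u : V} {x y : W} :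
    Anc (substParent p q) (.inr (u, y)) (.inr (u, x)) ↔ Anc q y x := by
  refine ⟨fun h => ?_, fun h => Relation.TransGen.lift (fun y : W => (Sum.inr (u, y) : V ⊕ V × W))
    (fun a b hab => ?_) _ _ h⟩
  · rcases anc_substParent_inr h with ⟨c, hc, hcx⟩ | ⟨a, ha, -⟩
    · cases hc; exact hcx
    · cases ha
  · simp [Function.onFun, substParent, hab]

lemma AncOrEq.substParent_inl {a b : V} (h : AncOrEq p a b) :
    AncOrEq (substParent p q) (.inl a) (.inl b) :=
  h.lift Sum.inl fun x y hxy => by simp [Function.onFun, substParent, hxy]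

lemma AncOrEq.substParent_inr {u : V} {x y : W} (h : AncOrEq q y x) :
    AncOrEq (substParent p q) (.inr (u, y)) (.inr (u, x)) :=
  h.lift (fun y : W => (Sum.inr (u, y) : V ⊕ V × W)) fun a b hab => by
    simp [Function.onFun, substParent, hab]

lemma AncOrEq.substParent_inl_inr (hq : ∀ x, ∃ r, q r = none ∧ AncOrEq q r x) {a u : V}
    (h : AncOrEq p a u) (x : W) : Anc (substParent p q) (.inl a) (.inr (u, x)) := by
  obtain ⟨r, hr, hrx⟩ := hq x
  have hroot : Anc (substParent p q) (.inl u) (.inr (u, r)) :=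
    anc_of_parent (by simp [substParent, hr])
  exact ((h.substParent_inl).trans_anc hroot).trans_ancOrEq hrx.substParent_inr

lemma ancOrEq_substParent_inl {z : V ⊕ V × W} {v : V}
    (h : AncOrEq (substParent p q) z (.inl v)) : ∃ a, z = .inl a ∧ AncOrEq p a v := by
  rcases ancOrEq_iff.1 h with rfl | h
  · exact ⟨v, rfl, AncOrEq.refl v⟩
  · obtain ⟨a, rfl, ha⟩ := anc_substParent_inl h
    exact ⟨a, rfl, ha.ancOrEq⟩

lemma ancOrEq_substParent_inr {z : V ⊕ V × W} {u : V} {x : W}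
    (h : AncOrEq (substParent p q) z (.inr (u, x))) :
    (∃ y, z = .inr (u, y) ∧ AncOrEq q y x) ∨ ∃ a, z = .inl a ∧ AncOrEq p a u := by
  rcases ancOrEq_iff.1 h with rfl | h
  · exact .inl ⟨x, rfl, AncOrEq.refl x⟩
  · exact (anc_substParent_inr h).imp_left fun ⟨y, hy, hyx⟩ => ⟨y, hy, hyx.ancOrEq⟩

end Ancestry

/-- Each interval `[left v, right v]` carries a window `[winL v, winR v]`, which validity keeps
free of endpoints and of other windows so that further intervals can be nested into it. -/
structure IntervalForest (V : Type) where
  parent : V → Option V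
  left : V → ℝ
  right : V → ℝ
  winL : V → ℝ
  winR : V → ℝ

namespace IntervalForest

inductive Feature
  | left
  | right
  | window

variable {V : Type} (F : IntervalForest V)

def feature : V × Feature → Set ℝ
  | (v, .left) => {F.left v}
  | (v, .right) => {F.right v}
  | (v, .window) => Set.Icc (F.winL v) (F.winR v)

def Overlaps (x y : V) : Prop := IntervalOverlap (F.left x) (F.right x) (F.left y) (F.right y)

lemma overlaps_comm {x y : V} : F.Overlaps x y ↔ F.Overlaps y x := intervalOverlap_comm

lemma not_overlaps_self (x : V) : ¬ F.Overlaps x x := not_intervalOverlap_self _ _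

def graph : SimpleGraph V where
  Adj x y := (Anc F.parent x y ∨ Anc F.parent y x) ∧ F.Overlaps x y
  symm := ⟨fun _ _ h => ⟨h.1.symm, F.overlaps_comm.1 h.2⟩⟩
  loopless := ⟨fun x h => F.not_overlaps_self x h.2⟩

def cover (o : V) : Set V := {z | AncOrEq F.parent z o ∧ F.winR o < F.right z}

noncomputable def mid (v : V) : ℝ := (F.winL v + F.winR v) / 2

/-- The affine map sending `(0, 1)` onto the right half `(mid u, winR u)` of the window of `u`. -/
noncomputable def embed (u : V) (t : ℝ) : ℝ := (F.winR u - F.mid u) * t + F.mid u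

def Bounded (c : ℝ) : Prop := ∀ v, 0 < F.left v ∧ F.right v < c

structure Valid : Prop where
  left_lt_winL : ∀ v, F.left v < F.winL v
  winL_lt_winR : ∀ v, F.winL v < F.winR v
  winR_lt_right : ∀ v, F.winR v < F.right v
  features_disjoint : Pairwise fun i j => Disjoint (F.feature i) (F.feature j)
  left_lt_left_of_anc : ∀ ⦃z v⦄, Anc F.parent z v → F.left z < F.left v
  min_right_lt_winL : ∀ ⦃v z z'⦄, AncOrEq F.parent z v → AncOrEq F.parent z' v →
    F.Overlaps z z' → min (F.right z) (F.right z') < F.winL v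
  not_overlaps_of_anc : ∀ ⦃w z z'⦄, Anc F.parent z w → Anc F.parent z' w →
    F.Overlaps z w → F.Overlaps z' w → ¬ F.Overlaps z z'

structure IsGadget (j : ℕ) : Prop where
  valid : F.Valid
  bounded : F.Bounded (1 / 2)
  forcing : ∀ {α : Type} (C : F.graph.Coloring α), ∃ o, j ≤ (C '' F.cover o).ncard

variable {F}

namespace Valid

lemma left_lt_winR (hF : F.Valid) (v : V) : F.left v < F.winR v :=
  (hF.left_lt_winL v).trans (hF.winL_lt_winR v)

lemma left_lt_right (hF : F.Valid) (v : V) : F.left v < F.right v :=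
  (hF.left_lt_winR v).trans (hF.winR_lt_right v)

lemma winL_lt_mid (hF : F.Valid) (v : V) : F.winL v < F.mid v := by
  have := hF.winL_lt_winR v; unfold mid; linarith

lemma mid_lt_winR (hF : F.Valid) (v : V) : F.mid v < F.winR v := by
  have := hF.winL_lt_winR v; unfold mid; linarith

lemma left_injective (hF : F.Valid) : Function.Injective F.left := fun v w h => by
  by_contra hvw
  exact Set.disjoint_singleton.1 (hF.features_disjoint (i := (v, .left)) (j := (w, .left))
    (by simp [hvw])) h

lemma right_injective (hF : F.Valid) : Function.Injective F.right := fun v w h => by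
  by_contra hvw
  exact Set.disjoint_singleton.1 (hF.features_disjoint (i := (v, .right)) (j := (w, .right))
    (by simp [hvw])) h

lemma left_ne_right (hF : F.Valid) (v w : V) : F.left v ≠ F.right w :=
  Set.disjoint_singleton.1 (hF.features_disjoint (i := (v, .left)) (j := (w, .right)) (by simp))

lemma not_mem_window (hF : F.Valid) {v w : V} {k : Feature} (hk : k ≠ .window) {t : ℝ}
    (ht : t ∈ F.feature (v, k)) : t < F.winL w ∨ F.winR w < t := by
  have := Set.disjoint_left.1 (hF.features_disjoint (i := (v, k)) (j := (w, .window))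
    (by simp [hk])) ht
  simp only [feature, Set.mem_Icc, not_and_or, not_le] at this
  exact this

lemma left_not_mem_window (hF : F.Valid) (v w : V) :
    F.left v < F.winL w ∨ F.winR w < F.left v :=
  hF.not_mem_window (k := .left) (by simp) rfl

lemma right_not_mem_window (hF : F.Valid) (v w : V) :
    F.right v < F.winL w ∨ F.winR w < F.right v :=
  hF.not_mem_window (k := .right) (by simp) rfl

lemma anc_irrefl (hF : F.Valid) (v : V) : ¬ Anc F.parent v v :=
  fun h => (hF.left_lt_left_of_anc h).false

lemma left_le_left_of_ancOrEq (hF : F.Valid) {z v : V} (h : AncOrEq F.parent z v) :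
    F.left z ≤ F.left v := by
  rcases ancOrEq_iff.1 h with rfl | h
  · exact le_rfl
  · exact (hF.left_lt_left_of_anc h).le

lemma mem_cover_self (hF : F.Valid) (o : V) : o ∈ F.cover o :=
  ⟨AncOrEq.refl o, hF.winR_lt_right o⟩

lemma feature_subset_Ioo (hF : F.Valid) {c : ℝ} (hc : F.Bounded c) (i : V × Feature) :
    F.feature i ⊆ Set.Ioo 0 c := by
  obtain ⟨v, k⟩ := i
  have := hc v
  have := hF.left_lt_winL v
  have := hF.winL_lt_winR v
  have := hF.winR_lt_right v
  cases k
  · exact Set.singleton_subset_iff.2 ⟨by linarith, by linarith⟩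
  · exact Set.singleton_subset_iff.2 ⟨by linarith, by linarith⟩
  · exact fun t ht => ⟨by linarith [ht.1], by linarith [ht.2]⟩

lemma embed_pos_slope (hF : F.Valid) (u : V) : 0 < F.winR u - F.mid u :=
  sub_pos.2 (hF.mid_lt_winR u)

lemma embed_strictMono (hF : F.Valid) (u : V) : StrictMono (F.embed u) :=
  fun _ _ h => by unfold embed; nlinarith [hF.embed_pos_slope u]

lemma mid_lt_embed (hF : F.Valid) (u : V) {t : ℝ} (ht : 0 < t) : F.mid u < F.embed u t := by
  unfold embed; nlinarith [hF.embed_pos_slope u]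

lemma embed_lt_winR (hF : F.Valid) (u : V) {t : ℝ} (ht : t < 1) : F.embed u t < F.winR u := by
  unfold embed; nlinarith [hF.embed_pos_slope u]

lemma embed_mapsTo (hF : F.Valid) (u : V) :
    Set.MapsTo (F.embed u) (Set.Ioo 0 1) (Set.Ioo (F.mid u) (F.winR u)) :=
  fun _ ht => ⟨hF.mid_lt_embed u ht.1, hF.embed_lt_winR u ht.2⟩

lemma Ioo_mid_subset_window (hF : F.Valid) (u : V) :
    Set.Ioo (F.mid u) (F.winR u) ⊆ F.feature (u, .window) :=
  Set.Ioo_subset_Icc_self.trans (Set.Icc_subset_Icc (hF.winL_lt_mid u).le le_rfl)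

lemma exists_root [Finite V] (hF : F.Valid) (x : V) :
    ∃ r, F.parent r = none ∧ AncOrEq F.parent r x :=
  exists_root_ancOrEq hF.anc_irrefl x

end Valid

section Subst

variable {W : Type}

/-- Nest a copy of `B`, squeezed by `A.embed u`, into the right half of the window of every
vertex `u` of `A`; the vertices of `A` keep the left halves of their windows. -/
noncomputable def subst (A : IntervalForest V) (B : IntervalForest W) :
    IntervalForest (V ⊕ V × W) where
  parent := substParent A.parent B.parent
  left := Sum.elim A.left fun p => A.embed p.1 (B.left p.2)
  right := Sum.elim A.right fun p => A.embed p.1 (B.right p.2)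
  winL := Sum.elim A.winL fun p => A.embed p.1 (B.winL p.2)
  winR := Sum.elim A.mid fun p => A.embed p.1 (B.winR p.2)

variable {A : IntervalForest V} {B : IntervalForest W}

noncomputable def halve (A : IntervalForest V) : IntervalForest V := { A with winR := A.mid }

lemma subst_feature_inl (a : V) (k : Feature) :
    (A.subst B).feature (.inl a, k) = A.halve.feature (a, k) := by
  cases k <;> rfl

namespace Valid

lemma halve_feature_subset (hA : A.Valid) (i : V × Feature) : A.halve.feature i ⊆ A.feature i := by
  obtain ⟨a, k⟩ := i
  cases k
  · exact subset_rfl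
  · exact subset_rfl
  · exact Set.Icc_subset_Icc le_rfl (hA.mid_lt_winR a).le

lemma disjoint_halve_feature (hA : A.Valid) (i : V × Feature) {u : V} {T : Set ℝ}
    (hT : T ⊆ Set.Ioo (A.mid u) (A.winR u)) : Disjoint (A.halve.feature i) T := by
  by_cases hi : i = (u, .window)
  · subst hi
    exact (Set.Iic_disjoint_Ioi le_rfl).mono Set.Icc_subset_Iic_self
      (hT.trans Set.Ioo_subset_Ioi_self)
  · exact (hA.features_disjoint hi).mono (hA.halve_feature_subset i)
      (hT.trans (hA.Ioo_mid_subset_window u))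

lemma subst_feature_inr (hA : A.Valid) (u : V) (x : W) (k : Feature) :
    (A.subst B).feature (.inr (u, x), k) = A.embed u '' B.feature (x, k) := by
  have := Set.image_affine_Icc' (hA.embed_pos_slope u) (A.mid u) (B.winL x) (B.winR x)
  cases k
  · simp [feature, subst]
  · simp [feature, subst]
  · exact this.symm

lemma subst_feature_inr_subset (hA : A.Valid) (hB : B.Valid) (hB1 : B.Bounded 1) (u : V)
    (i : W × Feature) :
    (A.subst B).feature (.inr (u, i.1), i.2) ⊆ Set.Ioo (A.mid u) (A.winR u) := by
  rw [hA.subst_feature_inr]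
  exact (Set.image_mono (hB.feature_subset_Ioo hB1 i)).trans (hA.embed_mapsTo u).image_subset

lemma subst_features_disjoint (hA : A.Valid) (hB : B.Valid) (hB1 : B.Bounded 1) :
    Pairwise fun i j => Disjoint ((A.subst B).feature i) ((A.subst B).feature j) := by
  have mixed : ∀ a k u y k', Disjoint ((A.subst B).feature (.inl a, k))
      ((A.subst B).feature (.inr (u, y), k')) := fun a k u y k' => by
    rw [subst_feature_inl]
    exact hA.disjoint_halve_feature _ (hA.subst_feature_inr_subset hB hB1 u (y, k'))
  rintro ⟨a | ⟨u, x⟩, k⟩ ⟨b | ⟨u', y⟩, k'⟩ hne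
  · rw [subst_feature_inl, subst_feature_inl]
    exact (hA.features_disjoint (by simpa [Prod.ext_iff] using hne)).mono
      (hA.halve_feature_subset _) (hA.halve_feature_subset _)
  · exact mixed a k u' y k'
  · exact (mixed b k' u x k).symm
  · by_cases hu : u = u'
    · subst hu
      rw [hA.subst_feature_inr, hA.subst_feature_inr,
        Set.disjoint_image_iff (hA.embed_strictMono u).injective]
      exact hB.features_disjoint (by simpa [Prod.ext_iff] using hne)
    · exact (hA.features_disjoint (i := (u, .window)) (j := (u', .window)) (by simpa)).mono
        ((hA.subst_feature_inr_subset hB hB1 u (x, k)).trans (hA.Ioo_mid_subset_window u))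
        ((hA.subst_feature_inr_subset hB hB1 u' (y, k')).trans (hA.Ioo_mid_subset_window u'))

lemma subst_left_lt_winL (hA : A.Valid) (hB : B.Valid) (z : V ⊕ V × W) :
    (A.subst B).left z < (A.subst B).winL z := by
  rcases z with a | ⟨u, x⟩
  · exact hA.left_lt_winL a
  · exact hA.embed_strictMono u (hB.left_lt_winL x)

lemma subst_winL_lt_winR (hA : A.Valid) (hB : B.Valid) (z : V ⊕ V × W) :
    (A.subst B).winL z < (A.subst B).winR z := by
  rcases z with a | ⟨u, x⟩
  · exact hA.winL_lt_mid a
  · exact hA.embed_strictMono u (hB.winL_lt_winR x)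

lemma subst_winR_lt_right (hA : A.Valid) (hB : B.Valid) (z : V ⊕ V × W) :
    (A.subst B).winR z < (A.subst B).right z := by
  rcases z with a | ⟨u, x⟩
  · exact (hA.mid_lt_winR a).trans (hA.winR_lt_right a)
  · exact hA.embed_strictMono u (hB.winR_lt_right x)

lemma subst_inr_bounds (hA : A.Valid) (hB1 : B.Bounded 1) (u : V) (x : W) :
    A.mid u < (A.subst B).left (.inr (u, x)) ∧ (A.subst B).right (.inr (u, x)) < A.winR u :=
  ⟨hA.mid_lt_embed u (hB1 x).1, hA.embed_lt_winR u (hB1 x).2⟩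

lemma subst_overlaps_inr (hA : A.Valid) {u : V} {x y : W} :
    (A.subst B).Overlaps (.inr (u, x)) (.inr (u, y)) ↔ B.Overlaps x y :=
  (hA.embed_strictMono u).intervalOverlap_iff

lemma subst_not_overlaps_inl_inr (hA : A.Valid) (hB1 : B.Bounded 1) (a u : V)
    (x : W) : ¬ (A.subst B).Overlaps (.inl a) (.inr (u, x)) :=
  not_intervalOverlap_of_avoid (hA.left_not_mem_window a u) (hA.right_not_mem_window a u)
    ((hA.winL_lt_mid u).trans (hA.subst_inr_bounds hB1 u x).1) (hA.subst_inr_bounds hB1 u x).2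

lemma subst_left_lt_left_of_anc (hA : A.Valid) (hB : B.Valid) (hB1 : B.Bounded 1)
    {z w : V ⊕ V × W} (h : Anc (A.subst B).parent z w) :
    (A.subst B).left z < (A.subst B).left w := by
  rcases w with b | ⟨u, x⟩
  · obtain ⟨a, rfl, hab⟩ := anc_substParent_inl h
    exact hA.left_lt_left_of_anc hab
  · rcases anc_substParent_inr h with ⟨y, rfl, hyx⟩ | ⟨a, rfl, hau⟩
    · exact hA.embed_strictMono u (hB.left_lt_left_of_anc hyx)
    · show A.left a < _
      linarith [hA.left_le_left_of_ancOrEq hau, hA.left_lt_winL u, hA.winL_lt_mid u,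
        (hA.subst_inr_bounds hB1 u x).1]

lemma subst_min_right_lt_winL (hA : A.Valid) (hB : B.Valid) (hB1 : B.Bounded 1)
    {v z z' : V ⊕ V × W} (hz : AncOrEq (A.subst B).parent z v)
    (hz' : AncOrEq (A.subst B).parent z' v) (ho : (A.subst B).Overlaps z z') :
    min ((A.subst B).right z) ((A.subst B).right z') < (A.subst B).winL v := by
  rcases v with b | ⟨u, x⟩
  · obtain ⟨a, rfl, ha⟩ := ancOrEq_substParent_inl hz
    obtain ⟨a', rfl, ha'⟩ := ancOrEq_substParent_inl hz'
    exact hA.min_right_lt_winL ha ha' ho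
  rcases ancOrEq_substParent_inr hz with ⟨y, rfl, hy⟩ | ⟨a, rfl, ha⟩ <;>
    rcases ancOrEq_substParent_inr hz' with ⟨y', rfl, hy'⟩ | ⟨a', rfl, ha'⟩
  · have := hB.min_right_lt_winL hy hy' ((hA.subst_overlaps_inr).1 ho)
    exact ((hA.embed_strictMono u).monotone.map_min).symm.trans_lt
      (hA.embed_strictMono u this)
  · exact absurd ((A.subst B).overlaps_comm.1 ho) (hA.subst_not_overlaps_inl_inr hB1 a' u y)
  · exact absurd ho (hA.subst_not_overlaps_inl_inr hB1 a u y')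
  · show min (A.right a) (A.right a') < _
    linarith [hA.min_right_lt_winL ha ha' ho, hA.winL_lt_mid u, (hA.subst_inr_bounds hB1 u x).1,
      hA.subst_left_lt_winL hB (.inr (u, x))]

lemma subst_not_overlaps_of_anc (hA : A.Valid) (hB : B.Valid) (hB1 : B.Bounded 1)
    {w z z' : V ⊕ V × W} (hz : Anc (A.subst B).parent z w) (hz' : Anc (A.subst B).parent z' w)
    (hzw : (A.subst B).Overlaps z w) (hz'w : (A.subst B).Overlaps z' w) :
    ¬ (A.subst B).Overlaps z z' := by
  rcases w with b | ⟨u, x⟩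
  · obtain ⟨a, rfl, ha⟩ := anc_substParent_inl hz
    obtain ⟨a', rfl, ha'⟩ := anc_substParent_inl hz'
    exact hA.not_overlaps_of_anc ha ha' hzw hz'w
  rcases anc_substParent_inr hz with ⟨y, rfl, hy⟩ | ⟨a, rfl, -⟩
  swap
  · exact absurd hzw (hA.subst_not_overlaps_inl_inr hB1 a u x)
  rcases anc_substParent_inr hz' with ⟨y', rfl, hy'⟩ | ⟨a', rfl, -⟩
  swap
  · exact absurd hz'w (hA.subst_not_overlaps_inl_inr hB1 a' u x)
  rw [hA.subst_overlaps_inr] at hzw hz'w ⊢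
  exact hB.not_overlaps_of_anc hy hy' hzw hz'w

lemma subst (hA : A.Valid) (hB : B.Valid) (hB1 : B.Bounded 1) : (A.subst B).Valid where
  left_lt_winL := hA.subst_left_lt_winL hB
  winL_lt_winR := hA.subst_winL_lt_winR hB
  winR_lt_right := hA.subst_winR_lt_right hB
  features_disjoint := hA.subst_features_disjoint hB hB1
  left_lt_left_of_anc _ _ := hA.subst_left_lt_left_of_anc hB hB1
  min_right_lt_winL _ _ _ := hA.subst_min_right_lt_winL hB hB1
  not_overlaps_of_anc _ _ _ := hA.subst_not_overlaps_of_anc hB hB1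

lemma subst_bounded (hA : A.Valid) {c : ℝ} (hc : A.Bounded c) (hB1 : B.Bounded 1) :
    (A.subst B).Bounded c := by
  rintro (a | ⟨u, x⟩)
  · exact hc a
  · have := hA.subst_inr_bounds hB1 u x
    constructor <;> linarith [hc u, hA.left_lt_winL u, hA.winL_lt_mid u, hA.winR_lt_right u]

end Valid

end Subst

section Pendant

variable (F) in
/-- Every vertex `v` gets a child `(v, ())` whose interval starts in the right half of the window
of `v` and ends in the window of `v` shifted by `1 / 2`, hence to the right of all of `F` when
`F.Bounded (1 / 2)`. -/
noncomputable def pendant : IntervalForest (V ⊕ V × Unit) where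
  parent := substParent F.parent fun _ => none
  left := Sum.elim F.left fun p => F.embed p.1 (1 / 2)
  right := Sum.elim F.right fun p => F.winR p.1 + 1 / 2
  winL := Sum.elim F.winL fun p => F.winL p.1 + 1 / 2
  winR := Sum.elim F.mid fun p => F.mid p.1 + 1 / 2

lemma pendant_feature_inl (a : V) (k : Feature) :
    F.pendant.feature (.inl a, k) = F.halve.feature (a, k) := by
  cases k <;> rfl

lemma pendant_anc_inr {z : V ⊕ V × Unit} {v : V} (h : Anc F.pendant.parent z (.inr (v, ()))) :
    ∃ a, z = .inl a ∧ AncOrEq F.parent a v :=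
  (anc_substParent_inr h).resolve_left fun ⟨_, _, hy⟩ => not_anc_of_parent_none hy

lemma pendant_ancOrEq_inr {z : V ⊕ V × Unit} {v : V}
    (h : AncOrEq F.pendant.parent z (.inr (v, ()))) :
    z = .inr (v, ()) ∨ ∃ a, z = .inl a ∧ AncOrEq F.parent a v := by
  rcases ancOrEq_iff.1 h with rfl | h
  · exact .inl rfl
  · exact .inr (pendant_anc_inr h)

namespace Valid

lemma pendant_left_inr_mem (hF : F.Valid) (v : V) :
    F.pendant.left (.inr (v, ())) ∈ Set.Ioo (F.mid v) (F.winR v) :=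
  hF.embed_mapsTo v ⟨by norm_num, by norm_num⟩

lemma pendant_feature_left_subset (hF : F.Valid) (v : V) :
    F.pendant.feature (.inr (v, ()), .left) ⊆ Set.Ioo (F.mid v) (F.winR v) :=
  Set.singleton_subset_iff.2 (hF.pendant_left_inr_mem v)

lemma pendant_feature_left_subset_Iio (hF : F.Valid) (hb : F.Bounded (1 / 2)) (v : V) :
    F.pendant.feature (.inr (v, ()), .left) ⊆ Set.Iio (1 / 2) :=
  (hF.pendant_feature_left_subset v).trans fun _ ht =>
    Set.mem_Iio.2 (by linarith [ht.2, hF.winR_lt_right v, (hb v).2])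

lemma pendant_feature_inl_subset_Iio (hF : F.Valid) (hb : F.Bounded (1 / 2)) (a : V)
    (k : Feature) : F.pendant.feature (.inl a, k) ⊆ Set.Iio (1 / 2) := by
  rw [pendant_feature_inl]
  exact (hF.halve_feature_subset _).trans
    ((hF.feature_subset_Ioo hb _).trans Set.Ioo_subset_Iio_self)

lemma pendant_feature_subset_shifted_window (hF : F.Valid) {k : Feature} (hk : k ≠ .left)
    (v : V) :
    F.pendant.feature (.inr (v, ()), k) ⊆ Set.Icc (F.winL v + 1 / 2) (F.winR v + 1 / 2) := by
  cases k
  · exact absurd rfl hk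
  · exact Set.singleton_subset_iff.2
      ⟨show F.winL v + 1 / 2 ≤ F.winR v + 1 / 2 by linarith [hF.winL_lt_winR v], le_rfl⟩
  · exact Set.Icc_subset_Icc le_rfl
      (show F.mid v + 1 / 2 ≤ F.winR v + 1 / 2 by linarith [hF.mid_lt_winR v])

lemma pendant_feature_subset_Ioi (hF : F.Valid) (hb : F.Bounded (1 / 2)) {k : Feature}
    (hk : k ≠ .left) (v : V) : F.pendant.feature (.inr (v, ()), k) ⊆ Set.Ioi (1 / 2) :=
  (hF.pendant_feature_subset_shifted_window hk v).trans fun _ ht =>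
    Set.mem_Ioi.2 (by linarith [ht.1, (hb v).1, hF.left_lt_winL v])

lemma pendant_disjoint_inl_inr (hF : F.Valid) (hb : F.Bounded (1 / 2)) (a : V) (k : Feature)
    (v : V) (k' : Feature) :
    Disjoint (F.pendant.feature (.inl a, k)) (F.pendant.feature (.inr (v, ()), k')) := by
  by_cases hk' : k' = .left
  · subst hk'
    rw [pendant_feature_inl]
    exact hF.disjoint_halve_feature _ (hF.pendant_feature_left_subset v)
  · exact disjoint_of_subset_Iio_of_subset_Ioi (hF.pendant_feature_inl_subset_Iio hb a k)
      (hF.pendant_feature_subset_Ioi hb hk' v)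

lemma pendant_disjoint_inr_inr (hF : F.Valid) (hb : F.Bounded (1 / 2)) {v w : V}
    {k k' : Feature} (hne : (v, k) ≠ (w, k')) :
    Disjoint (F.pendant.feature (.inr (v, ()), k)) (F.pendant.feature (.inr (w, ()), k')) := by
  by_cases hk : k = .left <;> by_cases hk' : k' = .left
  · subst hk hk'
    exact (hF.features_disjoint (i := (v, .window)) (j := (w, .window))
      (by simpa using hne)).mono ((hF.pendant_feature_left_subset v).trans
      (hF.Ioo_mid_subset_window v)) ((hF.pendant_feature_left_subset w).trans
      (hF.Ioo_mid_subset_window w))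
  · subst hk
    exact disjoint_of_subset_Iio_of_subset_Ioi (hF.pendant_feature_left_subset_Iio hb v)
      (hF.pendant_feature_subset_Ioi hb hk' w)
  · subst hk'
    exact (disjoint_of_subset_Iio_of_subset_Ioi (hF.pendant_feature_left_subset_Iio hb w)
      (hF.pendant_feature_subset_Ioi hb hk v)).symm
  by_cases hvw : v = w
  · subst hvw
    have hkk : k ≠ k' := fun h => hne (by rw [h])
    have key : Disjoint (F.pendant.feature (.inr (v, ()), .right))
        (F.pendant.feature (.inr (v, ()), .window)) :=
      Set.disjoint_singleton_left.2 fun h =>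
        (show F.mid v + 1 / 2 < F.winR v + 1 / 2 by linarith [hF.mid_lt_winR v]).not_ge h.2
    cases k <;> cases k' <;>
      first
        | exact absurd rfl hk
        | exact absurd rfl hk'
        | exact absurd rfl hkk
        | exact key
        | exact key.symm
  · have := (hF.features_disjoint (i := (v, .window)) (j := (w, .window)) (by simpa)).image
      (f := (· + 1 / 2)) (add_left_injective _).injOn (Set.subset_univ _) (Set.subset_univ _)
    simp only [feature, Set.image_add_const_Icc] at this
    exact this.mono (hF.pendant_feature_subset_shifted_window hk v)
      (hF.pendant_feature_subset_shifted_window hk' w)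

lemma pendant_features_disjoint (hF : F.Valid) (hb : F.Bounded (1 / 2)) :
    Pairwise fun i j => Disjoint (F.pendant.feature i) (F.pendant.feature j) := by
  rintro ⟨a | ⟨v, ⟨⟩⟩, k⟩ ⟨b | ⟨w, ⟨⟩⟩, k'⟩ hne
  · rw [pendant_feature_inl, pendant_feature_inl]
    exact (hF.features_disjoint (by simpa [Prod.ext_iff] using hne)).mono
      (hF.halve_feature_subset _) (hF.halve_feature_subset _)
  · exact hF.pendant_disjoint_inl_inr hb a k w k'
  · exact (hF.pendant_disjoint_inl_inr hb b k' v k).symm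
  · exact hF.pendant_disjoint_inr_inr hb (by simpa [Prod.ext_iff] using hne)

lemma pendant_left_lt_winL (hF : F.Valid) (hb : F.Bounded (1 / 2)) (z : V ⊕ V × Unit) :
    F.pendant.left z < F.pendant.winL z := by
  rcases z with a | ⟨v, ⟨⟩⟩
  · exact hF.left_lt_winL a
  · have := (hF.pendant_left_inr_mem v).2
    show _ < F.winL v + 1 / 2
    linarith [hF.winR_lt_right v, (hb v).1, (hb v).2, hF.left_lt_winL v]

lemma pendant_winL_lt_winR (hF : F.Valid) (z : V ⊕ V × Unit) :
    F.pendant.winL z < F.pendant.winR z := by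
  rcases z with a | ⟨v, ⟨⟩⟩
  · exact hF.winL_lt_mid a
  · show F.winL v + 1 / 2 < F.mid v + 1 / 2
    linarith [hF.winL_lt_mid v]

lemma pendant_winR_lt_right (hF : F.Valid) (z : V ⊕ V × Unit) :
    F.pendant.winR z < F.pendant.right z := by
  rcases z with a | ⟨v, ⟨⟩⟩
  · exact (hF.mid_lt_winR a).trans (hF.winR_lt_right a)
  · show F.mid v + 1 / 2 < F.winR v + 1 / 2
    linarith [hF.mid_lt_winR v]

lemma pendant_left_lt_left_of_anc (hF : F.Valid) {z w : V ⊕ V × Unit}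
    (h : Anc F.pendant.parent z w) : F.pendant.left z < F.pendant.left w := by
  rcases w with b | ⟨v, ⟨⟩⟩
  · obtain ⟨a, rfl, hab⟩ := anc_substParent_inl h
    exact hF.left_lt_left_of_anc hab
  · obtain ⟨a, rfl, hav⟩ := pendant_anc_inr h
    show F.left a < _
    linarith [hF.left_le_left_of_ancOrEq hav, hF.left_lt_winL v, hF.winL_lt_mid v,
      (hF.pendant_left_inr_mem v).1]

lemma pendant_min_right_lt_winL (hF : F.Valid) (hb : F.Bounded (1 / 2))
    {v z z' : V ⊕ V × Unit} (hz : AncOrEq F.pendant.parent z v)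
    (hz' : AncOrEq F.pendant.parent z' v) (ho : F.pendant.Overlaps z z') :
    min (F.pendant.right z) (F.pendant.right z') < F.pendant.winL v := by
  rcases v with b | ⟨v, ⟨⟩⟩
  · obtain ⟨a, rfl, ha⟩ := ancOrEq_substParent_inl hz
    obtain ⟨a', rfl, ha'⟩ := ancOrEq_substParent_inl hz'
    exact hF.min_right_lt_winL ha ha' ho
  have hwin : 1 / 2 < F.pendant.winL (.inr (v, ())) := by
    show _ < F.winL v + 1 / 2
    linarith [(hb v).1, hF.left_lt_winL v]
  rcases pendant_ancOrEq_inr hz with rfl | ⟨a, rfl, ha⟩ <;>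
    rcases pendant_ancOrEq_inr hz' with rfl | ⟨a', rfl, ha'⟩
  · exact absurd ho (F.pendant.not_overlaps_self _)
  · exact (min_le_right _ _).trans_lt ((hb a').2.trans hwin)
  · exact (min_le_left _ _).trans_lt ((hb a).2.trans hwin)
  · exact (hF.min_right_lt_winL ha ha' ho).trans
      (by show F.winL v < F.winL v + 1 / 2; norm_num)

lemma pendant_not_overlaps_of_anc (hF : F.Valid) {w z z' : V ⊕ V × Unit}
    (hz : Anc F.pendant.parent z w) (hz' : Anc F.pendant.parent z' w)
    (hzw : F.pendant.Overlaps z w) (hz'w : F.pendant.Overlaps z' w) :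
    ¬ F.pendant.Overlaps z z' := by
  rcases w with b | ⟨v, ⟨⟩⟩
  · obtain ⟨a, rfl, ha⟩ := anc_substParent_inl hz
    obtain ⟨a', rfl, ha'⟩ := anc_substParent_inl hz'
    exact hF.not_overlaps_of_anc ha ha' hzw hz'w
  intro ho
  have h₁ := hzw.lt_right_of_left_lt (hF.pendant_left_lt_left_of_anc hz)
  have h₂ := hz'w.lt_right_of_left_lt (hF.pendant_left_lt_left_of_anc hz')
  obtain ⟨a, rfl, ha⟩ := pendant_anc_inr hz
  obtain ⟨a', rfl, ha'⟩ := pendant_anc_inr hz'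
  have hmin : min (F.right a) (F.right a') < F.winL v := hF.min_right_lt_winL ha ha' ho
  have := (hF.pendant_left_inr_mem v).1
  change _ < F.right a at h₁
  change _ < F.right a' at h₂
  rcases min_lt_iff.1 hmin with h | h <;> linarith [hF.winL_lt_mid v]

lemma pendant (hF : F.Valid) (hb : F.Bounded (1 / 2)) : F.pendant.Valid where
  left_lt_winL := hF.pendant_left_lt_winL hb
  winL_lt_winR := hF.pendant_winL_lt_winR
  winR_lt_right := hF.pendant_winR_lt_right
  features_disjoint := hF.pendant_features_disjoint hb
  left_lt_left_of_anc _ _ := hF.pendant_left_lt_left_of_anc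
  min_right_lt_winL _ _ _ := hF.pendant_min_right_lt_winL hb
  not_overlaps_of_anc _ _ _ := hF.pendant_not_overlaps_of_anc

lemma pendant_bounded (hF : F.Valid) (hb : F.Bounded (1 / 2)) : F.pendant.Bounded 1 := by
  rintro (a | ⟨v, ⟨⟩⟩)
  · exact ⟨(hb a).1, (hb a).2.trans (by norm_num)⟩
  · have := (hF.pendant_left_inr_mem v).1
    refine ⟨?_, show F.winR v + 1 / 2 < 1 by linarith [hF.winR_lt_right v, (hb v).2]⟩
    linarith [(hb v).1, hF.left_lt_winL v, hF.winL_lt_mid v]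

end Valid

end Pendant

section Nest

variable {W : Type} {A : IntervalForest V} {B : IntervalForest W} {j : ℕ}

def substInlHom (A : IntervalForest V) (B : IntervalForest W) :
    A.graph →g (A.subst B).graph where
  toFun := Sum.inl
  map_rel' h := ⟨h.1.imp anc_substParent_inl_inl.2 anc_substParent_inl_inl.2, h.2⟩

def Valid.substInrHom (hA : A.Valid) (u : V) : B.graph →g (A.subst B).graph where
  toFun y := .inr (u, y)
  map_rel' h := ⟨h.1.imp anc_substParent_inr_inr.2 anc_substParent_inr_inr.2,
    hA.subst_overlaps_inr.2 h.2⟩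

def pendantInlHom (F : IntervalForest V) : F.graph →g F.pendant.graph where
  toFun := Sum.inl
  map_rel' h := ⟨h.1.imp anc_substParent_inl_inl.2 anc_substParent_inl_inl.2, h.2⟩

namespace Valid

lemma subst_inl_image_cover_subset [Finite W] (hA : A.Valid) (hB : B.Valid) (hB1 : B.Bounded 1)
    (u : V) (x : W) : Sum.inl '' A.cover u ⊆ (A.subst B).cover (.inr (u, x)) := by
  rintro _ ⟨a, ⟨hau, hwin⟩, rfl⟩
  refine ⟨(hau.substParent_inl_inr hB.exists_root x).ancOrEq, ?_⟩
  show _ < A.right a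
  linarith [hA.subst_winR_lt_right hB (.inr (u, x)), (hA.subst_inr_bounds hB1 u x).2]

lemma subst_inr_image_cover_subset (hA : A.Valid) (u : V) (x : W) :
    (fun y => .inr (u, y)) '' B.cover x ⊆ (A.subst B).cover (.inr (u, x)) := by
  rintro _ ⟨y, ⟨hyx, hwin⟩, rfl⟩
  exact ⟨hyx.substParent_inr, hA.embed_strictMono u hwin⟩

lemma pendant_inl_image_cover_subset (hF : F.Valid) (v : V) :
    Sum.inl '' F.cover v ⊆ F.pendant.cover (.inl v) := by
  rintro _ ⟨a, ⟨hav, hwin⟩, rfl⟩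
  exact ⟨hav.substParent_inl, (hF.mid_lt_winR v).trans hwin⟩

lemma pendant_adj_of_mem_cover (hF : F.Valid) (hb : F.Bounded (1 / 2)) {a v : V}
    (ha : a ∈ F.cover v) : F.pendant.graph.Adj (.inl a) (.inr (v, ())) := by
  refine ⟨.inl (ha.1.substParent_inl_inr (fun x => ⟨x, rfl, AncOrEq.refl x⟩) ()), .inl ?_⟩
  have := hF.pendant_left_inr_mem v
  refine ⟨?_, ?_, ?_⟩
  · show F.left a < _
    linarith [hF.left_le_left_of_ancOrEq ha.1, hF.left_lt_winL v, hF.winL_lt_mid v, this.1]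
  · exact this.2.trans ha.2
  · show F.right a < F.winR v + 1 / 2
    linarith [(hb a).2, (hb v).1, hF.left_lt_winR v]

end Valid

noncomputable def nest (F : IntervalForest V) : IntervalForest (V ⊕ V × (V ⊕ V × Unit)) :=
  F.subst F.pendant

namespace IsGadget

lemma nest_forcing [Finite V] (hF : F.IsGadget j) {α : Type} (C : F.nest.graph.Coloring α) :
    ∃ o, j + 1 ≤ (C '' F.nest.cover o).ncard := by
  have hP := hF.valid.pendant hF.bounded
  have hP1 := hF.valid.pendant_bounded hF.bounded
  have hfin : ∀ s : Set (V ⊕ V × (V ⊕ V × Unit)), (C '' s).Finite :=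
    fun s => s.toFinite.image _
  obtain ⟨o₁, h₁⟩ := hF.forcing (C.comp (F.substInlHom F.pendant))
  obtain ⟨o₂, h₂⟩ := hF.forcing (C.comp ((hF.valid.substInrHom o₁).comp F.pendantInlHom))
  have h₁' : j ≤ (C '' (Sum.inl '' F.cover o₁)).ncard := by rw [← Set.image_comp]; exact h₁
  have h₂' : j ≤ (C '' ((fun a => .inr (o₁, .inl a)) '' F.cover o₂)).ncard := by
    rw [← Set.image_comp]; exact h₂
  rcases Set.succ_le_ncard_union_or_eq (hfin _) (hfin _) h₁' h₂' with hbig | heq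
  · refine ⟨.inr (o₁, .inl o₂), hbig.trans (Set.ncard_le_ncard ?_ (hfin _))⟩
    rw [← Set.image_union]
    refine Set.image_mono (Set.union_subset
      (hF.valid.subst_inl_image_cover_subset hP hP1 o₁ _) ?_)
    have inner := (Set.image_mono (hF.valid.pendant_inl_image_cover_subset o₂)).trans
      (hF.valid.subst_inr_image_cover_subset (B := F.pendant) o₁ (.inl o₂))
    rwa [Set.image_image] at inner
  · set P : V ⊕ V × (V ⊕ V × Unit) := .inr (o₁, .inr (o₂, ()))
    have hnew : C P ∉ C '' (Sum.inl '' F.cover o₁) := by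
      rw [heq]
      rintro ⟨_, ⟨a, ha, rfl⟩, hCa⟩
      exact C.valid ((hF.valid.substInrHom o₁).map_rel
        (hF.valid.pendant_adj_of_mem_cover hF.bounded ha)) hCa
    refine ⟨P, ?_⟩
    calc j + 1 ≤ (C '' (Sum.inl '' F.cover o₁)).ncard + 1 := by omega
      _ = (insert (C P) (C '' (Sum.inl '' F.cover o₁))).ncard :=
        (Set.ncard_insert_of_notMem hnew (hfin _)).symm
      _ ≤ (C '' F.nest.cover P).ncard := by
        rw [← Set.image_insert_eq]
        exact Set.ncard_le_ncard (Set.image_mono (Set.insert_subset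
          ((hF.valid.subst hP hP1).mem_cover_self P)
          (hF.valid.subst_inl_image_cover_subset hP hP1 o₁ _))) (hfin _)

lemma nest [Finite V] (hF : F.IsGadget j) : F.nest.IsGadget (j + 1) where
  valid := hF.valid.subst (hF.valid.pendant hF.bounded) (hF.valid.pendant_bounded hF.bounded)
  bounded := hF.valid.subst_bounded hF.bounded (hF.valid.pendant_bounded hF.bounded)
  forcing := hF.nest_forcing

end IsGadget

end Nest

noncomputable def base : IntervalForest Unit where
  parent _ := none
  left _ := 1 / 8
  right _ := 3 / 8
  winL _ := 3 / 16
  winR _ := 1 / 4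

lemma valid_base : base.Valid where
  left_lt_winL _ := by norm_num [base]
  winL_lt_winR _ := by norm_num [base]
  winR_lt_right _ := by norm_num [base]
  features_disjoint := by
    rintro ⟨⟨⟩, k⟩ ⟨⟨⟩, k'⟩ h
    cases k <;> cases k' <;> simp_all [feature, base] <;> norm_num
  left_lt_left_of_anc _ _ h := absurd h not_anc_of_parent_none
  min_right_lt_winL _ z _ _ _ h := absurd h (base.not_overlaps_self z)
  not_overlaps_of_anc _ _ _ h := absurd h not_anc_of_parent_none

lemma isGadget_base : base.IsGadget 1 where
  valid := valid_base
  bounded _ := by norm_num [base]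
  forcing C := ⟨(), (Set.ncard_pos ((Set.toFinite _).image C)).2
    ⟨_, Set.mem_image_of_mem C (valid_base.mem_cover_self ())⟩⟩

end IntervalForest

def GadgetVertex : ℕ → Type
  | 0 => Unit
  | j + 1 => GadgetVertex j ⊕ GadgetVertex j × (GadgetVertex j ⊕ GadgetVertex j × Unit)

instance finite_gadgetVertex (j : ℕ) : Finite (GadgetVertex j) := by
  induction j with
  | zero => exact inferInstanceAs (Finite Unit)
  | succ j ih => exact inferInstanceAs (Finite (_ ⊕ _))

noncomputable def gadget : (j : ℕ) → IntervalForest (GadgetVertex j)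
  | 0 => IntervalForest.base
  | j + 1 => (gadget j).nest

lemma isGadget_gadget (j : ℕ) : (gadget j).IsGadget (j + 1) := by
  induction j with
  | zero => exact IntervalForest.isGadget_base
  | succ j ih => exact ih.nest

lemma three_mul_card_gadgetVertex_le (j : ℕ) : 3 * Nat.card (GadgetVertex j) ≤ 3 ^ 2 ^ j := by
  induction j with
  | zero => simp [GadgetVertex]
  | succ j ih =>
    set n := Nat.card (GadgetVertex j)
    have hcard : Nat.card (GadgetVertex (j + 1)) = n + n * (n + n * 1) := by
      simp only [GadgetVertex, Nat.card_sum, Nat.card_prod, Nat.card_unique, n]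
    calc 3 * Nat.card (GadgetVertex (j + 1)) ≤ (3 * n) * (3 * n) := by
          rw [hcard]; nlinarith [Nat.le_mul_self n]
      _ ≤ 3 ^ 2 ^ j * 3 ^ 2 ^ j := Nat.mul_le_mul ih ih
      _ = 3 ^ 2 ^ (j + 1) := by rw [← pow_add, pow_succ, mul_two]

lemma card_gadgetVertex_le (k : ℕ) : Nat.card (GadgetVertex k) ≤ 2 ^ 2 ^ (2 * k) := by
  have hm : 2 * 2 ^ k ≤ 2 ^ (2 * k) + 1 := by
    rw [pow_mul']; nlinarith [sq_nonneg ((2 : ℤ) ^ k - 1)]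
  have : 3 * Nat.card (GadgetVertex k) ≤ 2 * 2 ^ 2 ^ (2 * k) :=
    calc 3 * Nat.card (GadgetVertex k) ≤ 3 ^ 2 ^ k := three_mul_card_gadgetVertex_le k
      _ ≤ 4 ^ 2 ^ k := Nat.pow_le_pow_left (by norm_num) _
      _ = 2 ^ (2 * 2 ^ k) := by rw [pow_mul]; norm_num
      _ ≤ 2 ^ (2 ^ (2 * k) + 1) := Nat.pow_le_pow_right (by norm_num) hm
      _ = 2 * 2 ^ 2 ^ (2 * k) := pow_succ' _ _
  omega

namespace IntervalForest

variable {V : Type} {F : IntervalForest V}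

def forest (hF : F.Valid) : RootedForest V := ⟨F.parent, hF.anc_irrefl⟩

namespace Valid

lemma isOGG (hF : F.Valid) : IsOGG F.graph (F.forest hF) F.left F.right where
  nondeg := hF.left_lt_right
  endpoints_lr := hF.left_ne_right
  endpoints_l _ _ h := hF.left_injective.ne h
  endpoints_r _ _ h := hF.right_injective.ne h
  g1 _ _ h := hF.left_lt_left_of_anc h
  g2 _ _ := Iff.rfl
  g3 := by
    rintro ⟨x, y, z, hxy, hyz, ho, hsub⟩
    have hxy : Anc F.parent x y := hxy
    have hyz : Anc F.parent y z := hyz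
    have hxz : Anc F.parent x z := hxy.trans hyz
    have hmin := hF.min_right_lt_winL hxz.ancOrEq hyz.ancOrEq ho
    have hle := hF.left_lt_right z |>.le
    have hx := (Set.Icc_subset_Icc_iff hle).1 (hsub.trans Set.inter_subset_left)
    have hy := (Set.Icc_subset_Icc_iff hle).1 (hsub.trans Set.inter_subset_right)
    rcases min_lt_iff.1 hmin with h | h <;> linarith [hF.winL_lt_winR z, hF.winR_lt_right z]

lemma cliqueFree (hF : F.Valid) : F.graph.CliqueFree 3 := by
  classical
  intro s hs
  obtain ⟨a, b, c, hab, hac, hbc, -⟩ := SimpleGraph.is3Clique_iff.1 hs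
  have key := @hF.not_overlaps_of_anc
  have ov := @F.overlaps_comm
  rcases hab with ⟨hab | hba, oab⟩ <;> rcases hac with ⟨hac | hca, oac⟩ <;>
    rcases hbc with ⟨hbc | hcb, obc⟩
  · exact key hac hbc oac obc oab
  · exact key hab hcb oab (ov.1 obc) oac
  · exact hF.anc_irrefl a (hab.trans (hbc.trans hca))
  · exact key hab hcb oab (ov.1 obc) oac
  · exact key hac hbc oac obc oab
  · exact hF.anc_irrefl a (hac.trans (hcb.trans hba))
  · exact key hba hca (ov.1 oab) (ov.1 oac) obc
  · exact key hba hca (ov.1 oab) (ov.1 oac) obc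

end Valid

lemma IsGadget.le_chromaticNumber {j : ℕ} (hF : F.IsGadget j) :
    (j : ℕ∞) ≤ F.graph.chromaticNumber := by
  refine SimpleGraph.le_chromaticNumber_iff_coloring.2 fun m C => ?_
  obtain ⟨o, ho⟩ := hF.forcing C
  exact_mod_cast ho.trans ((Set.ncard_le_card _).trans (Nat.card_fin m).le)

end IntervalForest

namespace RootedForest

variable {V W : Type}

def comap (e : W ≃ V) (M : RootedForest V) : RootedForest W where
  parent w := (M.parent (e w)).map e.symm
  acyclic v h := M.acyclic (e v) (Relation.TransGen.lift e (fun a b hab => by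
    obtain ⟨c, hc, hca⟩ := Option.map_eq_some_iff.1 hab
    simpa [Function.onFun, ← hca] using hc) _ _ h)

lemma anc_comap_iff (e : W ≃ V) (M : RootedForest V) {x y : W} :
    (M.comap e).anc x y ↔ M.anc (e x) (e y) := by
  constructor
  · refine fun h => Relation.TransGen.lift e (fun a b hab => ?_) _ _ h
    obtain ⟨c, hc, hca⟩ := Option.map_eq_some_iff.1 hab
    simpa [Function.onFun, ← hca] using hc
  · intro h
    have := Relation.TransGen.lift (r := fun a b => M.parent b = some a)
      (p := fun a b => (M.comap e).parent b = some a) e.symm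
      (fun a b hab => by simp [Function.onFun, comap, hab]) _ _ h
    simp only [Function.onFun, Equiv.symm_apply_apply] at this
    exact this

end RootedForest

lemma IsOGG.comap {V W : Type} {G : SimpleGraph V} {M : RootedForest V} {μl μr : V → ℝ}
    (e : W ≃ V) (h : IsOGG G M μl μr) : IsOGG (G.comap e) (M.comap e) (μl ∘ e) (μr ∘ e) where
  nondeg v := h.nondeg (e v)
  endpoints_lr v w := h.endpoints_lr (e v) (e w)
  endpoints_l v w hvw := h.endpoints_l (e v) (e w) (e.injective.ne hvw)
  endpoints_r v w hvw := h.endpoints_r (e v) (e w) (e.injective.ne hvw)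
  g1 x y hxy := h.g1 (e x) (e y) ((M.anc_comap_iff e).1 hxy)
  g2 x y := by
    simp only [SimpleGraph.comap_adj, RootedForest.anc_comap_iff, Function.comp_apply]
    exact h.g2 (e x) (e y)
  g3 := fun ⟨x, y, z, hxy, hyz, ho, hsub⟩ =>
    h.g3 ⟨e x, e y, e z, (M.anc_comap_iff e).1 hxy, (M.anc_comap_iff e).1 hyz, ho, hsub⟩

theorem stmt8_general (k : ℕ) :
    ∃ (n : ℕ) (G : SimpleGraph (Fin n)) (M : RootedForest (Fin n)) (μl μr : Fin n → ℝ),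
      IsOGG G M μl μr ∧ G.CliqueFree 3 ∧ n ≤ 2 ^ 2 ^ (2 * k) ∧
      (k : ℕ∞) ≤ G.chromaticNumber := by
  have hg := isGadget_gadget k
  let e := (Finite.equivFin (GadgetVertex k)).symm
  refine ⟨_, (gadget k).graph.comap e, ((gadget k).forest hg.valid).comap e, _, _,
    hg.valid.isOGG.comap e, ?_, card_gadgetVertex_le k, ?_⟩
  · exact hg.valid.cliqueFree.comap (SimpleGraph.Iso.comap e _).isContained
  · rw [SimpleGraph.chromaticNumber_congr (SimpleGraph.Iso.comap e _)]
    exact le_trans (by norm_cast; omega) hg.le_chromaticNumber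

/-- For every `k ≥ 1` there is a triangle-free overlap game graph with at most
`2 ^ 2 ^ (2 * k)` vertices and chromatic number at least `k`. -/
theorem stmt8 (k : ℕ) (hk : 1 ≤ k) :
    ∃ (n : ℕ) (G : SimpleGraph (Fin n)) (M : RootedForest (Fin n)) (μl μr : Fin n → ℝ),
      IsOGG G M μl μr ∧ G.CliqueFree 3 ∧ n ≤ 2 ^ 2 ^ (2 * k) ∧
      (k : ℕ∞) ≤ G.chromaticNumber :=
  stmt8_general k
end

section
/- Every finite family 𝔉 of frames in general position with clique number ω(𝔉) ≤ k can be partitioned into at most k non-crossing subfamilies. -/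
open Set

/-- An axis-aligned rectangle `[l, r] × [b, t]` with `l < r` and `b < t`. -/
structure Rect where
  l : ℝ
  r : ℝ
  b : ℝ
  t : ℝ
  hlr : l < r
  hbt : b < t

noncomputable instance : DecidableEq Rect := Classical.decEq _

/-- The filling rectangle, as a subset of the plane. -/
def Rect.toSet (R : Rect) : Set (ℝ × ℝ) := Set.Icc R.l R.r ×ˢ Set.Icc R.b R.t

/-- The frame: the boundary (topological frontier) of the filling rectangle. -/
def Rect.frame (R : Rect) : Set (ℝ × ℝ) := frontier R.toSet

/-- A family of frames is in general position. -/
def GenPos (𝔉 : Finset Rect) : Prop :=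
  ∀ F ∈ 𝔉, ∀ F' ∈ 𝔉, F ≠ F' →
    [F.l, F.r, F'.l, F'.r].Pairwise (· ≠ ·) ∧
    [F.b, F.t, F'.b, F'.t].Pairwise (· ≠ ·)

/-- The intersection graph of a family of frames. -/
def frameGraph (𝔉 : Finset Rect) : SimpleGraph {F : Rect // F ∈ 𝔉} where
  Adj F F' := F ≠ F' ∧ (F.1.frame ∩ F'.1.frame).Nonempty
  symm := by
    constructor
    intro a b h
    exact ⟨h.1.symm, by rw [Set.inter_comm]; exact h.2⟩
  loopless := by constructor; intro a h; exact h.1 rfl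

/-- The intersection of frames `F` and `F'` is rightward-directed. -/
def RightDir (F F' : Rect) : Prop :=
  F.l < F'.l ∧ F'.l < F.r ∧ F.r < F'.r ∧ F.b < F'.b ∧ F'.b < F'.t ∧ F'.t < F.t

/-- The intersection of frames `F` and `F'` is leftward-directed. -/
def LeftDir (F F' : Rect) : Prop :=
  F'.l < F.l ∧ F.l < F'.r ∧ F'.r < F.r ∧ F.b < F'.b ∧ F'.b < F'.t ∧ F'.t < F.t

/-- The intersection of frames `F` and `F'` is upward-directed. -/
def UpDir (F F' : Rect) : Prop :=
  F.b < F'.b ∧ F'.b < F.t ∧ F.t < F'.t ∧ F.l < F'.l ∧ F'.l < F'.r ∧ F'.r < F.r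

/-- The intersection of frames `F` and `F'` is downward-directed. -/
def DownDir (F F' : Rect) : Prop :=
  F'.b < F.b ∧ F.b < F'.t ∧ F'.t < F.t ∧ F.l < F'.l ∧ F'.l < F'.r ∧ F'.r < F.r

/-- Any two intersecting frames of the family satisfy `P` (in one of the two orders). -/
def IntersectingPairsSatisfy (𝔉 : Finset Rect) (P : Rect → Rect → Prop) : Prop :=
  ∀ F ∈ 𝔉, ∀ F' ∈ 𝔉, F ≠ F' → (F.frame ∩ F'.frame).Nonempty → P F F' ∨ P F' F

def IsRightwardDirected (𝔉 : Finset Rect) : Prop := IntersectingPairsSatisfy 𝔉 RightDir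

/-- A directed family of frames. -/
def IsDirectedFamily (𝔉 : Finset Rect) : Prop :=
  IntersectingPairsSatisfy 𝔉 RightDir ∨ IntersectingPairsSatisfy 𝔉 LeftDir ∨
    IntersectingPairsSatisfy 𝔉 UpDir ∨ IntersectingPairsSatisfy 𝔉 DownDir

/-- `F` is enclosed by `F'`. -/
def Enclosed (F F' : Rect) : Prop :=
  F'.l < F.l ∧ F.r < F'.r ∧ F'.b < F.b ∧ F.t < F'.t

/-- A clean family of frames. -/
def Clean (𝔉 : Finset Rect) : Prop :=
  ¬ ∃ F₁ ∈ 𝔉, ∃ F₂ ∈ 𝔉, ∃ F₃ ∈ 𝔉, F₁ ≠ F₂ ∧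
    (Rect.frame F₁ ∩ Rect.frame F₂).Nonempty ∧ Enclosed F₃ F₁ ∧ Enclosed F₃ F₂

/-- The overlap graph of a family of rectangles: two rectangles are adjacent if they
intersect but neither is a subset of the other. -/
def overlapGraph (𝔉 : Finset Rect) : SimpleGraph {R : Rect // R ∈ 𝔉} where
  Adj R S := (R.1.toSet ∩ S.1.toSet).Nonempty ∧ ¬ R.1.toSet ⊆ S.1.toSet ∧ ¬ S.1.toSet ⊆ R.1.toSet
  symm := by
    constructor
    intro a b h
    exact ⟨by rw [Set.inter_comm]; exact h.1, h.2.2, h.2.1⟩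
  loopless := by constructor; intro a h; exact h.2.1 subset_rfl

/-- Two frames cross. -/
def Cross (F₁ F₂ : Rect) : Prop :=
  (F₂.l < F₁.l ∧ F₁.r < F₂.r ∧ F₁.b < F₂.b ∧ F₂.t < F₁.t) ∨
  (F₁.l < F₂.l ∧ F₂.r < F₁.r ∧ F₂.b < F₁.b ∧ F₁.t < F₂.t)

/-- A non-crossing family of frames. -/
def NonCrossing (𝔉 : Finset Rect) : Prop :=
  ∀ F₁ ∈ 𝔉, ∀ F₂ ∈ 𝔉, ¬ Cross F₁ F₂

/-!
Crossing is the comparability relation of a strict partial order: `F < G` when `F` lies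
horizontally inside `G` while `G` lies vertically inside `F`. Two comparable frames meet at a
corner of their intersection, so a chain is a clique of the intersection graph and has at most
`k` elements. Colouring each frame by its height in this order (Mirsky's theorem) therefore uses
only the colours `0, …, k - 1`, and two crossing frames, being comparable, get different colours.
-/

theorem Order.height_lt_of_cliqueFree {α : Type*} [Preorder α] {G : SimpleGraph α} {k : ℕ}
    (hG : ∀ a b : α, a < b → G.Adj a b) (hcl : G.CliqueFree (k + 1)) (a : α) :
    Order.height a < k := by
  by_contra! hk
  obtain ⟨p, -, hlen⟩ := Order.exists_series_of_le_height a hk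
  have hinj : Function.Injective p := p.strictMono.injective
  refine hcl (Finset.univ.map ⟨p, hinj⟩) ⟨?_, by simp [hlen]⟩
  simp only [Finset.coe_map, Finset.coe_univ, Set.image_univ]
  rintro _ ⟨i, rfl⟩ _ ⟨j, rfl⟩ hne
  rcases lt_or_gt_of_ne (hinj.ne_iff.mp hne) with h | h
  · exact hG _ _ (p.strictMono h)
  · exact (hG _ _ (p.strictMono h)).symm

theorem Finset.exists_strictMonoOn_lt_of_cliqueFree {α : Type*} [Preorder α] (s : Finset α)
    {G : SimpleGraph s} {k : ℕ} (hG : ∀ a b : s, a < b → G.Adj a b)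
    (hcl : G.CliqueFree (k + 1)) :
    ∃ c : α → ℕ, (∀ a ∈ s, c a < k) ∧ StrictMonoOn c s := by
  classical
  have hlt := Order.height_lt_of_cliqueFree hG hcl
  have hcast (a : s) : ((Order.height a).toNat : ℕ∞) = Order.height a :=
    ENat.natCast_toNat ((hlt a).ne_top)
  refine ⟨fun a => if h : a ∈ s then (Order.height (⟨a, h⟩ : s)).toNat else 0,
    fun a ha => ?_, fun a ha b hb hab => ?_⟩
  · simp only [ha, dite_true]
    rw [← Nat.cast_lt (α := ℕ∞), hcast]
    exact hlt _
  · simp only [Finset.mem_coe] at ha hb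
    simp only [ha, hb, dite_true]
    rw [← Nat.cast_lt (α := ℕ∞), hcast, hcast]
    exact Order.height_strictMono hab (hlt _ |>.trans_le le_top)

def CrossLT (F G : Rect) : Prop := G.l < F.l ∧ F.r < G.r ∧ F.b < G.b ∧ G.t < F.t

instance : IsStrictOrder Rect CrossLT where
  irrefl _ h := lt_irrefl _ h.1
  trans _ _ _ h₁ h₂ :=
    ⟨h₂.1.trans h₁.1, h₁.2.1.trans h₂.2.1, h₁.2.2.1.trans h₂.2.2.1, h₂.2.2.2.trans h₁.2.2.2⟩

theorem Rect.frame_eq (R : Rect) :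
    R.frame = Icc R.l R.r ×ˢ {R.b, R.t} ∪ {R.l, R.r} ×ˢ Icc R.b R.t := by
  rw [Rect.frame, Rect.toSet, frontier_prod_eq, closure_Icc, closure_Icc,
    frontier_Icc R.hlr.le, frontier_Icc R.hbt.le]

theorem CrossLT.frame_inter_nonempty {F G : Rect} (h : CrossLT F G) :
    (F.frame ∩ G.frame).Nonempty := by
  obtain ⟨hl, hr, hb, ht⟩ := h
  refine ⟨(F.l, G.b), ?_, ?_⟩ <;> simp only [Rect.frame_eq]
  · exact Or.inr ⟨Or.inl rfl, hb.le, (G.hbt.trans ht).le⟩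
  · exact Or.inl ⟨⟨hl.le, (F.hlr.trans hr).le⟩, Or.inl rfl⟩

theorem exists_coloring_strictMono_crossLT {k : ℕ} {𝔉 : Finset Rect}
    (hcl : (frameGraph 𝔉).CliqueFree (k + 1)) :
    ∃ c : Rect → ℕ, (∀ F ∈ 𝔉, c F < k) ∧ ∀ F ∈ 𝔉, ∀ G ∈ 𝔉, CrossLT F G → c F < c G :=
  letI := partialOrderOfSO CrossLT
  Finset.exists_strictMonoOn_lt_of_cliqueFree 𝔉 (G := frameGraph 𝔉)
    (fun _ _ h => ⟨h.ne, CrossLT.frame_inter_nonempty h⟩) hcl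

theorem stmt15_general (k : ℕ) (𝔉 : Finset Rect)
    (hcl : (frameGraph 𝔉).CliqueFree (k + 1)) :
    ∃ c : Rect → ℕ, (∀ F ∈ 𝔉, c F < k) ∧
      ∀ i : ℕ, NonCrossing (𝔉.filter (fun F => c F = i)) := by
  obtain ⟨c, hck, hmono⟩ := exists_coloring_strictMono_crossLT hcl
  refine ⟨c, hck, fun i F₁ hF₁ F₂ hF₂ hcross => ?_⟩
  rw [Finset.mem_filter] at hF₁ hF₂
  rcases hcross with h | h
  · exact (hmono F₁ hF₁.1 F₂ hF₂.1 h).ne (hF₁.2.trans hF₂.2.symm)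
  · exact (hmono F₂ hF₂.1 F₁ hF₁.1 h).ne (hF₂.2.trans hF₁.2.symm)

/-- Every family of frames in general position with clique number at most `k` can be
partitioned into at most `k` non-crossing subfamilies. -/
theorem stmt15 (k : ℕ) (𝔉 : Finset Rect) (hgp : GenPos 𝔉)
    (hcl : (frameGraph 𝔉).CliqueFree (k + 1)) :
    ∃ c : Rect → ℕ, (∀ F ∈ 𝔉, c F < k) ∧
      ∀ i : ℕ, NonCrossing (𝔉.filter (fun F => c F = i)) :=
  stmt15_general k 𝔉 hcl
end
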